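/- Let m : ℂ₊ → ℂ₊ be holomorphic with m(z) = ∫ 1/(x−z) dν(x) for a compactly supported probability measure ν on ℝ. If a > 0, b ∈ ℝ and m satisfies a·m(z)² + (z−b)·m(z) + 1 = 0 for all z ∈ ℂ₊, then ν is the semicircle distribution centered at b with density √(4a−(x−b)²)/(2πa) on [b−2√a, b+2√a]. -/

import Mathlib

/-!
For a compactly supported continuous `f`, Fubini turns `∫ f(E) Im m(E + iη) dE` into the
`ν`-integral of `f` convolved with the Poisson kernel of the half-plane, which tends to `π f`
as `η ↓ 0`; so these integrals converge to `π ∫ f dν` (Stieltjes inversion). On the other hand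
the quadratic equation and `Im m > 0` determine `Im m(z)` as an explicit function continuous on
all of `ℂ`, whose values on `ℝ` are `√(4a - (E - b)²) / (2a)`. Comparing the two limits shows
that `ν` and the semicircle law integrate every compactly supported continuous function alike,
and locally finite measures on `ℝ` are determined by these integrals.
-/

open Real MeasureTheory Complex

open Filter Topology

/-- `Im (x - (E + iη))⁻¹ = halfPlanePoissonKernel η (x - E)`; its integral is `π`, not `1`. -/
noncomputable def halfPlanePoissonKernel (η u : ℝ) : ℝ := η / (u ^ 2 + η ^ 2)

section PoissonKernel

variable {η : ℝ}

theorem halfPlanePoissonKernel_nonneg (hη : 0 < η) (u : ℝ) : 0 ≤ halfPlanePoissonKernel η u := by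
  unfold halfPlanePoissonKernel; positivity

theorem halfPlanePoissonKernel_le_inv (hη : 0 < η) (u : ℝ) : halfPlanePoissonKernel η u ≤ η⁻¹ := by
  rw [halfPlanePoissonKernel, div_le_iff₀ (by positivity)]
  field_simp
  nlinarith [sq_nonneg u]

theorem integral_mul_halfPlanePoissonKernel (f : ℝ → ℝ) (hη : 0 < η) (x : ℝ) :
    ∫ E, f E * halfPlanePoissonKernel η (x - E) = ∫ t, f (x + η * t) * (1 + t ^ 2)⁻¹ := by
  calc ∫ E, f E * halfPlanePoissonKernel η (x - E)
      = ∫ y, f (x + y) * halfPlanePoissonKernel η y := by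
        rw [← integral_add_left_eq_self _ x]
        simp [halfPlanePoissonKernel]
    _ = η * ∫ t, f (x + η * t) * halfPlanePoissonKernel η (η * t) := by
        rw [Measure.integral_comp_mul_left (fun y => f (x + y) * halfPlanePoissonKernel η y),
          abs_inv, abs_of_pos hη, smul_eq_mul, mul_inv_cancel_left₀ hη.ne']
    _ = ∫ t, f (x + η * t) * (1 + t ^ 2)⁻¹ := by
        rw [← integral_const_mul]
        congr 1 with t
        simp only [halfPlanePoissonKernel]
        field_simp
        ring

theorem norm_mul_inv_one_add_sq_le {u C : ℝ} (hu : ‖u‖ ≤ C) (t : ℝ) :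
    ‖u * (1 + t ^ 2)⁻¹‖ ≤ C * (1 + t ^ 2)⁻¹ := by
  rw [norm_mul, norm_inv, Real.norm_of_nonneg (by positivity : (0 : ℝ) ≤ 1 + t ^ 2)]
  gcongr

theorem continuous_integral_comp_add_mul_mul_inv_one_add_sq {f : ℝ → ℝ} {C : ℝ}
    (hf : Continuous f) (hC : ∀ y, ‖f y‖ ≤ C) :
    Continuous fun p : ℝ × ℝ => ∫ t, f (p.2 + p.1 * t) * (1 + t ^ 2)⁻¹ := by
  have hinv : Continuous fun t : ℝ => (1 + t ^ 2)⁻¹ := by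
    fun_prop (disch := exact fun t => (by positivity : (0 : ℝ) < 1 + t ^ 2).ne')
  exact continuous_of_dominated (fun _ => (by fun_prop : Continuous _).aestronglyMeasurable)
    (fun _ => .of_forall fun t => norm_mul_inv_one_add_sq_le (hC _) t)
    (integrable_inv_one_add_sq.const_mul C) (.of_forall fun _ => by fun_prop)

theorem norm_integral_comp_add_mul_mul_inv_one_add_sq_le {f : ℝ → ℝ} {C : ℝ}
    (hC : ∀ y, ‖f y‖ ≤ C) (x : ℝ) :
    ‖∫ t, f (x + η * t) * (1 + t ^ 2)⁻¹‖ ≤ C * π := by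
  calc ‖∫ t, f (x + η * t) * (1 + t ^ 2)⁻¹‖ ≤ ∫ t, C * (1 + t ^ 2)⁻¹ :=
        norm_integral_le_of_norm_le (integrable_inv_one_add_sq.const_mul C)
          (.of_forall fun t => norm_mul_inv_one_add_sq_le (hC _) t)
    _ = C * π := by rw [integral_const_mul, integral_univ_inv_one_add_sq]

end PoissonKernel

section StieltjesTransform

variable (ν : Measure ℝ) [IsFiniteMeasure ν]

theorem integrable_inv_ofReal_sub {z : ℂ} (hz : 0 < z.im) :
    Integrable (fun x : ℝ => ((x : ℂ) - z)⁻¹) ν := by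
  have him_le (x : ℝ) : z.im ≤ ‖(x : ℂ) - z‖ := by
    have h := Complex.abs_im_le_norm ((x : ℂ) - z)
    rw [sub_im, ofReal_im, zero_sub, abs_neg] at h
    exact (le_abs_self _).trans h
  refine Integrable.mono' (integrable_const z.im⁻¹) ?_ (.of_forall fun x => ?_)
  · exact (Continuous.inv₀ (by fun_prop)
      fun x => norm_pos_iff.1 (hz.trans_le (him_le x))).aestronglyMeasurable
  · rw [norm_inv]
    exact inv_anti₀ hz (him_le x)

theorem im_integral_inv_ofReal_sub {z : ℂ} (hz : 0 < z.im) :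
    (∫ x : ℝ, ((x : ℂ) - z)⁻¹ ∂ν).im = ∫ x, halfPlanePoissonKernel z.im (x - z.re) ∂ν := by
  have h := integral_im (𝕜 := ℂ) (integrable_inv_ofReal_sub ν hz)
  simp only [RCLike.im_to_complex] at h
  rw [← h]
  congr 1 with x
  simp [halfPlanePoissonKernel, Complex.inv_im, Complex.normSq_apply]
  ring

theorem integral_mul_im_integral_inv_ofReal_sub {f : ℝ → ℝ} (hf : Continuous f)
    (hcs : HasCompactSupport f) {η : ℝ} (hη : 0 < η) :
    ∫ E : ℝ, f E * (∫ x : ℝ, ((x : ℂ) - (E + η * I))⁻¹ ∂ν).im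
      = ∫ x, (∫ t, f (x + η * t) * (1 + t ^ 2)⁻¹) ∂ν := by
  have hprod : Integrable
      (Function.uncurry fun E x : ℝ => f E * halfPlanePoissonKernel η (x - E)) (volume.prod ν) := by
    refine Integrable.mono' ((hf.integrable_of_hasCompactSupport hcs).norm.mul_prod
      (integrable_const η⁻¹)) ?_ (.of_forall fun p => ?_)
    · exact (Continuous.aestronglyMeasurable (by unfold halfPlanePoissonKernel; fun_prop
        (disch := exact fun p => by positivity)))
    · rw [Function.uncurry_apply_pair, norm_mul,
        Real.norm_of_nonneg (halfPlanePoissonKernel_nonneg hη _)]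
      gcongr
      exact halfPlanePoissonKernel_le_inv hη _
  calc ∫ E : ℝ, f E * (∫ x : ℝ, ((x : ℂ) - (E + η * I))⁻¹ ∂ν).im
      = ∫ E, ∫ x, f E * halfPlanePoissonKernel η (x - E) ∂ν := by
        congr 1 with E
        rw [im_integral_inv_ofReal_sub ν (by simpa using hη), integral_const_mul]
        simp
    _ = ∫ x, (∫ E, f E * halfPlanePoissonKernel η (x - E)) ∂ν := integral_integral_swap hprod
    _ = _ := by
        congr 1 with x
        rw [← integral_mul_halfPlanePoissonKernel f hη x]

theorem tendsto_integral_mul_im_integral_inv_ofReal_sub {f : ℝ → ℝ} (hf : Continuous f)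
    (hcs : HasCompactSupport f) :
    Tendsto (fun η : ℝ => ∫ E : ℝ, f E * (∫ x : ℝ, ((x : ℂ) - (E + η * I))⁻¹ ∂ν).im)
      (𝓝[>] 0) (𝓝 (π * ∫ x, f x ∂ν)) := by
  obtain ⟨C, hC⟩ := hf.bounded_above_of_compact_support hcs
  have hP := continuous_integral_comp_add_mul_mul_inv_one_add_sq hf hC
  have hcont : Continuous fun η : ℝ => ∫ x, (∫ t, f (x + η * t) * (1 + t ^ 2)⁻¹) ∂ν :=
    continuous_of_dominated
      (fun η => (hP.comp (.prodMk_right η)).aestronglyMeasurable)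
      (fun η => .of_forall fun x => norm_integral_comp_add_mul_mul_inv_one_add_sq_le hC x)
      (integrable_const (C * π))
      (.of_forall fun x => hP.comp (.prodMk_left x))
  have hzero : ∫ x, (∫ t, f (x + 0 * t) * (1 + t ^ 2)⁻¹) ∂ν = π * ∫ x, f x ∂ν := by
    simp [integral_const_mul, integral_univ_inv_one_add_sq, mul_comm]
  rw [← hzero]
  refine (hcont.tendsto 0).mono_left nhdsWithin_le_nhds |>.congr' ?_
  filter_upwards [self_mem_nhdsWithin] with η hη
  exact (integral_mul_im_integral_inv_ofReal_sub ν hf hcs hη).symm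

end StieltjesTransform

theorem tendsto_integral_mul_comp_add_mul_I {g : ℂ → ℝ} (hg : Continuous g) {f : ℝ → ℝ}
    (hf : Continuous f) (hcs : HasCompactSupport f) :
    Tendsto (fun η : ℝ => ∫ E : ℝ, f E * g (E + η * I)) (𝓝 0) (𝓝 (∫ E : ℝ, f E * g E)) := by
  have hcont := continuousOn_integral_of_compact_support (μ := volume) (s := Set.univ) hcs
    (f := fun (η E : ℝ) => f E * g (E + η * I)) (by fun_prop)
    (fun _ _ _ hE => by rw [image_eq_zero_of_notMem_tsupport hE, zero_mul])
  simpa using (continuousOn_univ.1 hcont).tendsto 0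

theorem integral_withDensity_ofReal {α : Type*} [MeasurableSpace α] {μ : Measure α} {ρ : α → ℝ}
    (hρ : Measurable ρ) (hρ_nonneg : ∀ x, 0 ≤ ρ x) (g : α → ℝ) :
    ∫ x, g x ∂μ.withDensity (fun x => ENNReal.ofReal (ρ x)) = ∫ x, g x * ρ x ∂μ := by
  rw [integral_withDensity_eq_integral_toReal_smul hρ.ennreal_ofReal
    (.of_forall fun _ => ENNReal.ofReal_lt_top)]
  congr 1 with x
  rw [ENNReal.toReal_ofReal (hρ_nonneg x), smul_eq_mul, mul_comm]

theorem Complex.im_eq_sqrt_of_im_nonneg {s : ℂ} (hs : 0 ≤ s.im) :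
    s.im = √((‖s ^ 2‖ - (s ^ 2).re) / 2) := by
  have h : (‖s ^ 2‖ - (s ^ 2).re) / 2 = s.im ^ 2 := by
    rw [norm_pow, ← Complex.normSq_eq_norm_sq, Complex.normSq_apply, pow_two s, Complex.mul_re]
    ring
  rw [h, Real.sqrt_sq hs]

/-- The imaginary part of the root of `a w² + (z - b) w + 1 = 0` in the upper half-plane, read off
from `(2 a w + z - b)² = (z - b)² - 4 a` by `Complex.im_eq_sqrt_of_im_nonneg`. -/
noncomputable def quadraticRootIm (a b : ℝ) (z : ℂ) : ℝ :=
  (√((‖(z - b) ^ 2 - 4 * a‖ - ((z - b) ^ 2 - 4 * a).re) / 2) - z.im) / (2 * a)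

theorem im_eq_quadraticRootIm {a b : ℝ} (ha : 0 < a) {z w : ℂ} (hz : 0 ≤ z.im) (hw : 0 ≤ w.im)
    (hq : a * w ^ 2 + (z - b) * w + 1 = 0) : w.im = quadraticRootIm a b z := by
  have hsq : (2 * a * w + (z - b)) ^ 2 = (z - b) ^ 2 - 4 * a := by
    linear_combination (4 * (a : ℂ)) * hq
  have him : (2 * a * w + (z - b)).im = 2 * a * w.im + z.im := by simp
  have h := Complex.im_eq_sqrt_of_im_nonneg (s := 2 * a * w + (z - b)) (by rw [him]; positivity)
  rw [hsq, him] at h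
  rw [quadraticRootIm, ← h]
  field_simp
  ring

theorem continuous_quadraticRootIm (a b : ℝ) : Continuous (quadraticRootIm a b) := by
  unfold quadraticRootIm
  fun_prop

theorem quadraticRootIm_ofReal (a b x : ℝ) :
    quadraticRootIm a b x = √(4 * a - (x - b) ^ 2) / (2 * a) := by
  set u := (x - b) ^ 2 - 4 * a
  have hu : ((x : ℂ) - b) ^ 2 - 4 * a = (u : ℂ) := by push_cast [u]; ring
  have hsqrt : √((|u| - u) / 2) = √(-u) := by
    rcases le_total u 0 with hneg | hpos
    · rw [abs_of_nonpos hneg]; ring_nf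
    · rw [abs_of_nonneg hpos, sub_self, zero_div, Real.sqrt_zero, eq_comm, Real.sqrt_eq_zero']
      linarith
  rw [quadraticRootIm, hu, Complex.norm_real, Real.norm_eq_abs, Complex.ofReal_re,
    Complex.ofReal_im, sub_zero, hsqrt, neg_sub]

theorem stieltjes_quadratic_implies_semicircle_general
    (a b : ℝ) (ha : 0 < a) (ν : Measure ℝ) [IsProbabilityMeasure ν]
    (m : ℂ → ℂ)
    (hmap : ∀ z : ℂ, 0 < z.im → 0 < (m z).im)
    (hrep : ∀ z : ℂ, 0 < z.im → m z = ∫ x : ℝ, ((x : ℂ) - z)⁻¹ ∂ν)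
    (hquad : ∀ z : ℂ, 0 < z.im →
      (a : ℂ) * m z ^ 2 + (z - (b : ℂ)) * m z + 1 = 0) :
    ν = volume.withDensity
      (fun x : ℝ => ENNReal.ofReal (Real.sqrt (4 * a - (x - b) ^ 2) / (2 * π * a))) := by
  have := IsLocallyFiniteMeasure.withDensity_ofReal (μ := volume)
    (f := fun x : ℝ => √(4 * a - (x - b) ^ 2) / (2 * π * a)) (by fun_prop)
  refine Measure.ext_of_integral_eq_on_compactlySupported fun f => ?_
  rw [integral_withDensity_ofReal (by fun_prop) (fun _ => by positivity)]
  have hm (η E : ℝ) (hη : η ∈ Set.Ioi 0) :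
      (∫ x : ℝ, ((x : ℂ) - (E + η * I))⁻¹ ∂ν).im = quadraticRootIm a b (E + η * I) := by
    have hz : 0 < ((E : ℂ) + η * I).im := by simpa using hη
    rw [← hrep _ hz, im_eq_quadraticRootIm ha hz.le (hmap _ hz).le (hquad _ hz)]
  have hroot := (tendsto_integral_mul_comp_add_mul_I (continuous_quadraticRootIm a b)
    (map_continuous f) f.hasCompactSupport).mono_left (nhdsWithin_le_nhds (s := Set.Ioi 0))
  have hinversion :=
    tendsto_integral_mul_im_integral_inv_ofReal_sub ν (map_continuous f) f.hasCompactSupport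
  have hlimits := tendsto_nhds_unique (hroot.congr' (eventually_nhdsWithin_of_forall fun η hη =>
    integral_congr_ae (.of_forall fun E => by rw [hm η E hη]))) hinversion
  simp only [quadraticRootIm_ofReal] at hlimits
  refine mul_left_cancel₀ pi_ne_zero (hlimits.symm.trans ?_)
  rw [← integral_const_mul]
  congr 1 with x
  field_simp

/-- if `m : ℂ₊ → ℂ₊` is holomorphic, is the Stieltjes transform
of a compactly supported probability measure `ν` on `ℝ`, and satisfies the
quadratic equation `a·m(z)² + (z−b)·m(z) + 1 = 0` on the upper half-plane,
then `ν` is the semicircle distribution centered at `b` with density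
`√(4a−(x−b)²)/(2πa)`. -/
theorem stieltjes_quadratic_implies_semicircle
    (a b : ℝ) (ha : 0 < a) (ν : Measure ℝ) [IsProbabilityMeasure ν]
    (hcomp : ∃ R : ℝ, ν {x : ℝ | R < |x|} = 0)
    (m : ℂ → ℂ)
    (hhol : DifferentiableOn ℂ m {z : ℂ | 0 < z.im})
    (hmap : ∀ z : ℂ, 0 < z.im → 0 < (m z).im)
    (hrep : ∀ z : ℂ, 0 < z.im → m z = ∫ x : ℝ, ((x : ℂ) - z)⁻¹ ∂ν)
    (hquad : ∀ z : ℂ, 0 < z.im →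
      (a : ℂ) * m z ^ 2 + (z - (b : ℂ)) * m z + 1 = 0) :
    ν = volume.withDensity
      (fun x : ℝ => ENNReal.ofReal (Real.sqrt (4 * a - (x - b) ^ 2) / (2 * π * a))) :=
  stieltjes_quadratic_implies_semicircle_general a b ha ν m hmap hrep hquad
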